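/- Let Γ be a finite connected simplicial graph whose vertices are labeled by nontrivial cyclic groups and let G_Γ be the associated graph product. Then Out^pc(G_Γ) is abelian if and only if Γ contains no SILs. -/

import Mathlib

/-!
`Out^pc(G_Γ)` is abelian iff any two partial conjugations `π_{v,C}`, `π_{w,D}` commute modulo
inner automorphisms. They commute outright if `v = w` or `v ~ w`. For distinct non-adjacent
`v, w`, a component `D` of `Γ ∖ st(w)` avoiding `v` lies in a component `C'` of `Γ ∖ st(v)`; if
also `w ∉ C'`, then `C' ⊆ D`, and `C' = D` is a common component avoiding `v` and `w`, which is
exactly a SIL. So without SILs, `D ⊆ C` if `w ∈ C` and `D ∩ C = ∅` otherwise, and in both cases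
the partial conjugations commute. If `w ∈ C` and `v ∈ D`, the absence of SILs forces every vertex
outside `C ∪ D` to be adjacent to both `v` and `w`, and then `π_{v,C} π_{w,D}` and
`π_{w,D} π_{v,C}` differ by conjugation by a commutator of `v` and `w`.

Conversely, a SIL provides a common component `C` of `Γ ∖ st(v)` and `Γ ∖ st(w)` avoiding `v`
and `w`. For `x ∈ C` the vertices `v, w, x` span no edge, and retracting `G_Γ` onto the free
product `G_v * G_w * G_x` shows that `π_{v,C}` and `π_{w,C}` do not commute modulo inner
automorphisms.
-/

open Monoid

namespace ArXiv

universe u uG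

variable {V : Type u}

/-- The star of a vertex: the vertex together with its neighbors. -/
def star (Γ : SimpleGraph V) (v : V) : Set V := insert v (Γ.neighborSet v)

/-- `C ⊆ V` is the vertex set of a connected component of the full subgraph of `Γ`
induced on `S`. -/
def IsCompOf (Γ : SimpleGraph V) (S : Set V) (C : Set V) : Prop :=
  ∃ c : (Γ.induce S).ConnectedComponent, C = Subtype.val '' c.supp

/-- `Γ` has a separating intersection of links: there are distinct non-adjacent vertices
`v, w` such that some connected component of `Γ ∖ (lk(v) ∩ lk(w))` contains neither `v`
nor `w`. -/
def HasSIL (Γ : SimpleGraph V) : Prop :=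
  ∃ v w : V, v ≠ w ∧ ¬ Γ.Adj v w ∧
    ∃ C : Set V, IsCompOf Γ ((Γ.neighborSet v ∩ Γ.neighborSet w)ᶜ) C ∧ v ∉ C ∧ w ∉ C

variable (Γ : SimpleGraph V) (G : V → Type uG) [∀ v, Group (G v)]

/-- The commutator relators defining the graph product. -/
def rels : Set (Monoid.CoprodI G) :=
  {x | ∃ (v w : V) (_ : Γ.Adj v w) (g : G v) (h : G w),
    x = CoprodI.of g * CoprodI.of h * (CoprodI.of g)⁻¹ * (CoprodI.of h)⁻¹}

/-- The graph product of the vertex groups `G v` over the graph `Γ`: the quotient of the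
free product by the normal closure of the commutators of adjacent vertex groups. -/
def GraphProduct : Type (max u uG) :=
  Monoid.CoprodI G ⧸ Subgroup.normalClosure (rels Γ G)

instance : Group (GraphProduct Γ G) :=
  inferInstanceAs (Group (Monoid.CoprodI G ⧸ Subgroup.normalClosure (rels Γ G)))

/-- The canonical map from a vertex group into the graph product. -/
def of {v : V} : G v →* GraphProduct Γ G :=
  (QuotientGroup.mk' (Subgroup.normalClosure (rels Γ G))).comp CoprodI.of

theorem of_commute {v w : V} (h : Γ.Adj v w) (g : G v) (k : G w) :
    Commute (of Γ G g) (of Γ G k) := by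
  rw [← commutatorElement_eq_one_iff_commute]
  have hmem : (CoprodI.of g * CoprodI.of k * (CoprodI.of g)⁻¹ * (CoprodI.of k)⁻¹ :
      Monoid.CoprodI G) ∈ Subgroup.normalClosure (rels Γ G) :=
    Subgroup.subset_normalClosure ⟨v, w, h, g, k, rfl⟩
  have h1 : (QuotientGroup.mk' (Subgroup.normalClosure (rels Γ G)))
      (CoprodI.of g * CoprodI.of k * (CoprodI.of g)⁻¹ * (CoprodI.of k)⁻¹) = 1 :=
    (QuotientGroup.eq_one_iff _).mpr hmem
  simp only [map_mul, map_inv] at h1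
  rw [commutatorElement_def]
  exact h1

/-- `π` is the partial conjugation `π_{v,C}`, for vertex groups with chosen generators
`gen`: it conjugates the generators in `C` by (the generator of) `v` and fixes all other
generators. -/
def IsPartialConj (gen : ∀ v, G v) (π : MulAut (GraphProduct Γ G)) (v : V) (C : Set V) :
    Prop :=
  (∀ u ∈ C, ∀ g : G u, π (of Γ G g) = of Γ G (gen v) * of Γ G g * (of Γ G (gen v))⁻¹) ∧
  (∀ u ∉ C, ∀ g : G u, π (of Γ G g) = of Γ G g)

/-- `π` is the partial conjugation `π_{a,C}` by the element `a` of the vertex group `G v`: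
it conjugates the vertex groups in `C` by `a` and fixes all other vertex groups. -/
def IsPartialConjBy {v : V} (a : G v) (π : MulAut (GraphProduct Γ G)) (C : Set V) : Prop :=
  (∀ u ∈ C, ∀ g : G u, π (of Γ G g) = of Γ G a * of Γ G g * (of Γ G a)⁻¹) ∧
  (∀ u ∉ C, ∀ g : G u, π (of Γ G g) = of Γ G g)

/-- The vertex set of the graph `Γ̃`: pairs `p_{v,C}` where `C` is a connected component
of `Γ ∖ st(v)`. -/
def TV : Type u := {p : V × Set V // IsCompOf Γ ((star Γ p.1)ᶜ) p.2}

/-- The graph `Γ̃`: vertices `p_{v,C}` and `p_{w,D}` are joined by an edge unless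
`v, w` are distinct non-adjacent vertices with `v ∈ D` and `w ∈ C`. -/
def tilde : SimpleGraph (TV Γ) where
  Adj p q := p ≠ q ∧
    ¬(p.1.1 ≠ q.1.1 ∧ ¬ Γ.Adj p.1.1 q.1.1 ∧ p.1.1 ∈ q.1.2 ∧ q.1.1 ∈ p.1.2)
  symm := ⟨by
    rintro p q ⟨h1, h2⟩
    exact ⟨h1.symm, fun ⟨a, b, c, d⟩ => h2 ⟨a.symm, fun e => b e.symm, d, c⟩⟩⟩
  loopless := ⟨fun p h => h.1 rfl⟩

/-- The graph product `G_{Γ̃}`, where the vertex `p_{v,C}` is labeled by (a copy of) the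
group `G v`. -/
abbrev TildeProduct : Type (max u uG) :=
  GraphProduct (tilde Γ) (fun p : TV Γ => G p.1.1)

/-- The element `p_v = ∏_C p_{v,C} ∈ G_{Γ̃}`, the product over all connected components
`C` of `Γ ∖ st(v)` (the factors pairwise commute). -/
noncomputable def pvert [Finite V] (gen : ∀ v, G v) (v : V) : TildeProduct Γ G :=
  haveI : Fintype {C : Set V // IsCompOf Γ ((star Γ v)ᶜ) C} := Fintype.ofFinite _
  Finset.noncommProd (Finset.univ : Finset {C : Set V // IsCompOf Γ ((star Γ v)ᶜ) C})
    (fun c => of (tilde Γ) (fun p : TV Γ => G p.1.1) (v := ⟨(v, c.1), c.2⟩) (gen v))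
    (by
      intro a _ b _ hab
      have hadj : (tilde Γ).Adj ⟨(v, a.1), a.2⟩ ⟨(v, b.1), b.2⟩ := by
        refine And.intro (fun h => hab (Subtype.ext (congrArg (fun x : TV Γ => x.1.2) h))) ?_
        rintro ⟨hne, -⟩
        exact hne rfl
      exact of_commute (tilde Γ) (fun p : TV Γ => G p.1.1) hadj (gen v) (gen v))

/-- The set `Δ` of vertices adjacent to every other vertex of `Γ`. -/
def Delta (Γ : SimpleGraph V) : Set V := {v | ∀ u, u ≠ v → Γ.Adj v u}

/-- The subgroup of the graph product generated by the vertex groups `G v`, `v ∈ T`. -/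
def vertexSubgroup (T : Set V) : Subgroup (GraphProduct Γ G) :=
  Subgroup.closure {x | ∃ v ∈ T, ∃ g : G v, x = of Γ G g}

/-- `w` is a reduced word for the element `g` of the graph product: a minimal length
expression of `g` as a product of nontrivial elements of vertex groups. -/
def IsReducedWord (g : GraphProduct Γ G) (w : List (Σ v : V, G v)) : Prop :=
  (w.map fun l => of Γ G l.2).prod = g ∧ (∀ l ∈ w, l.2 ≠ 1) ∧
    ∀ w' : List (Σ v : V, G v), (w'.map fun l => of Γ G l.2).prod = g →
      w.length ≤ w'.length

end ArXiv

namespace Monoid.CoprodI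

variable {ι : Type*} {H : ι → Type*} [∀ i, Group (H i)]

theorem NeWord.toList_eq_of_prod_eq {i j k l : ι} {w₁ : NeWord H i j} {w₂ : NeWord H k l}
    (h : w₁.prod = w₂.prod) : w₁.toList = w₂.toList := by
  classical
  exact congrArg Word.toList (Word.equiv.symm.injective h : w₁.toWord = w₂.toWord)

/-- `ω c ω⁻¹` is itself a reduced word, of length at least three. -/
theorem NeWord.conj_of_ne {k l s : ι} (ω : NeWord H k l) (hls : l ≠ s) {c : H s}
    (hc : c ≠ 1) : ω.prod * of c * ω.prod⁻¹ ≠ of c := by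
  classical
  intro h
  have hprod : ((ω.append hls (NeWord.singleton c hc)).append hls.symm ω.inv).prod =
      (NeWord.singleton c hc).prod := by
    rw [NeWord.append_prod, NeWord.append_prod, NeWord.prod_singleton, NeWord.inv_prod, h]
  have hlen := congrArg List.length (NeWord.toList_eq_of_prod_eq hprod)
  simp only [NeWord.toList, List.length_append, List.length_singleton] at hlen
  have := List.length_pos_iff.2 ω.inv.toList_ne_nil
  omega

theorem eq_one_of_commute_of_ne {i j : ι} (hij : i ≠ j) {a : H i} {b : H j} (ha : a ≠ 1)
    (hb : b ≠ 1) {g : CoprodI H} (hga : Commute g (of a)) (hgb : Commute g (of b)) :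
    g = 1 := by
  classical
  by_contra hg
  obtain ⟨k, l, ω, hω⟩ := NeWord.of_word (Word.equiv g) fun h =>
    hg ((Word.equiv.eq_symm_apply.2 h).trans Word.prod_empty)
  have hωg : ω.prod = g := by
    rw [NeWord.prod, hω]
    exact Word.equiv.symm_apply_apply g
  rcases ne_or_eq l i with hli | rfl
  · exact ω.conj_of_ne hli ha (by rw [hωg, hga.eq, mul_inv_cancel_right])
  · exact ω.conj_of_ne hij hb (by rw [hωg, hgb.eq, mul_inv_cancel_right])

/-- The two sides are reduced words starting with letters from different factors. -/
theorem conj_mul_of_ne_conj_mul_of {i j k : ι} (hij : i ≠ j) (hik : i ≠ k) (hjk : j ≠ k)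
    {a : H i} {b : H j} {x : H k} (ha : a ≠ 1) (hb : b ≠ 1) (hx : x ≠ 1) :
    MulAut.conj (of b * of a) (of x) ≠ MulAut.conj (of a * of b) (of x) := by
  classical
  intro h
  have ha' : a⁻¹ ≠ 1 := inv_ne_one.2 ha
  have hb' : b⁻¹ ≠ 1 := inv_ne_one.2 hb
  have hprod : (((((NeWord.singleton b hb).append hij.symm (NeWord.singleton a ha)).append hik
      (NeWord.singleton x hx)).append hik.symm (NeWord.singleton a⁻¹ ha')).append hij
      (NeWord.singleton b⁻¹ hb')).prod =
    (((((NeWord.singleton a ha).append hij (NeWord.singleton b hb)).append hjk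
      (NeWord.singleton x hx)).append hjk.symm (NeWord.singleton b⁻¹ hb')).append hij.symm
      (NeWord.singleton a⁻¹ ha')).prod := by
    simpa only [NeWord.append_prod, NeWord.prod_singleton, map_inv, MulAut.conj_apply,
      mul_inv_rev, mul_assoc] using h
  have hhead := congrArg List.head? (NeWord.toList_eq_of_prod_eq hprod)
  simp only [NeWord.toList_head?, Option.some.injEq, Sigma.mk.injEq] at hhead
  exact hij hhead.1.symm

end Monoid.CoprodI

theorem Subgroup.quotient_subgroupOf_closure_commutative_iff {M : Type*} [Group M]
    (s : Set M) (N : Subgroup M) [(N.subgroupOf (closure s)).Normal] :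
    (∀ a b : closure s ⧸ N.subgroupOf (closure s), a * b = b * a) ↔
      ∀ x ∈ s, ∀ y ∈ s, ∃ n ∈ N, x * y = y * x * n := by
  set π := QuotientGroup.mk' (N.subgroupOf (closure s))
  have hπ : ∀ x y : closure s, π x * π y = π y * π x ↔ ∃ n ∈ N, (x * y : M) = y * x * n := by
    intro x y
    rw [← map_mul, ← map_mul, QuotientGroup.mk'_apply, QuotientGroup.mk'_apply,
      QuotientGroup.eq, ← inv_mem_iff, Subgroup.mem_subgroupOf]
    refine ⟨fun h => ⟨_, h, by push_cast; group⟩, ?_⟩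
    rintro ⟨n, hn, he⟩
    convert hn using 1
    push_cast
    rw [he]
    group
  constructor
  · intro h x hx y hy
    exact (hπ ⟨x, subset_closure hx⟩ ⟨y, subset_closure hy⟩).1 (h _ _)
  · intro h
    have htop : closure (π '' (Subtype.val ⁻¹' s)) = ⊤ := by
      rw [← MonoidHom.map_closure, closure_closure_coe_preimage,
        map_top_of_surjective _ (QuotientGroup.mk'_surjective _)]
    have hcomm : ∀ a ∈ π '' (Subtype.val ⁻¹' s), ∀ b ∈ π '' (Subtype.val ⁻¹' s),
        a * b = b * a := by
      rintro _ ⟨x, hx, rfl⟩ _ ⟨y, hy, rfl⟩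
      exact (hπ x y).2 (h x hx y hy)
    have := isMulCommutative_closure hcomm
    intro a b
    exact setLike_mul_comm (htop ▸ mem_top a : a ∈ closure _) (htop ▸ mem_top b)

namespace ArXiv

universe u uG

variable {V : Type u} {Γ : SimpleGraph V} {G : V → Type uG} [∀ v, Group (G v)]
  {S T C D K : Set V} {u v w x y : V}

lemma exists_isCompOf_mem (hx : x ∈ S) : ∃ C, IsCompOf Γ S C ∧ x ∈ C :=
  ⟨_, ⟨(Γ.induce S).connectedComponentMk ⟨x, hx⟩, rfl⟩, ⟨x, hx⟩, rfl, rfl⟩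

namespace IsCompOf

lemma nonempty (hC : IsCompOf Γ S C) : C.Nonempty := by
  obtain ⟨c, rfl⟩ := hC
  obtain ⟨x, hx⟩ := c.nonempty_supp
  exact ⟨x, x, hx, rfl⟩

lemma subset (hC : IsCompOf Γ S C) : C ⊆ S := by
  obtain ⟨c, rfl⟩ := hC
  rintro _ ⟨x, -, rfl⟩
  exact x.2

lemma mem_of_adj (hC : IsCompOf Γ S C) (hx : x ∈ C) (hy : y ∈ S) (hxy : Γ.Adj x y) :
    y ∈ C := by
  obtain ⟨c, rfl⟩ := hC
  obtain ⟨x, hxc, rfl⟩ := hx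
  exact ⟨⟨y, hy⟩, c.mem_supp_of_adj_mem_supp hxc hxy, rfl⟩

lemma subset_of_closed (hC : IsCompOf Γ S C) (hx : x ∈ C) (hxK : x ∈ K)
    (hK : ∀ a ∈ C, a ∈ K → ∀ b ∈ C, Γ.Adj a b → b ∈ K) : C ⊆ K := by
  obtain ⟨c, rfl⟩ := hC
  rintro _ ⟨y, hy, rfl⟩
  obtain ⟨x, hxc, rfl⟩ := hx
  have hxy : (Γ.induce S).Reachable x y := SimpleGraph.ConnectedComponent.exact
    ((c.mem_supp_iff x).1 hxc |>.trans ((c.mem_supp_iff y).1 hy).symm)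
  rw [SimpleGraph.reachable_iff_reflTransGen] at hxy
  clear hy
  suffices y ∈ c.supp ∧ y.1 ∈ K from this.2
  induction hxy with
  | refl => exact ⟨hxc, hxK⟩
  | tail _ hab ih =>
    have hb := c.mem_supp_of_adj_mem_supp ih.1 hab
    exact ⟨hb, hK _ ⟨_, ih.1, rfl⟩ ih.2 _ ⟨_, hb, rfl⟩ hab⟩

lemma subset_of_mem (hC : IsCompOf Γ S C) (hCT : C ⊆ T) (hD : IsCompOf Γ T D)
    (hxC : x ∈ C) (hxD : x ∈ D) : C ⊆ D :=
  hC.subset_of_closed hxC hxD fun _ _ ha _ hb hab => hD.mem_of_adj ha (hCT hb) hab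

lemma eq_of_mem (hC : IsCompOf Γ S C) (hD : IsCompOf Γ S D) (hxC : x ∈ C) (hxD : x ∈ D) :
    C = D :=
  (hC.subset_of_mem hC.subset hD hxC hxD).antisymm (hD.subset_of_mem hD.subset hC hxD hxC)

lemma of_subset (hC : IsCompOf Γ S C) (hCT : C ⊆ T)
    (hcl : ∀ a ∈ C, ∀ b ∈ T, Γ.Adj a b → b ∈ C) : IsCompOf Γ T C := by
  obtain ⟨x, hx⟩ := hC.nonempty
  obtain ⟨D, hD, hxD⟩ := exists_isCompOf_mem (Γ := Γ) (hCT hx)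
  have hDC : D ⊆ C :=
    hD.subset_of_closed hxD hx fun a _ ha b hb hab => hcl a ha b (hD.subset hb) hab
  rwa [(hC.subset_of_mem hCT hD hx hxD).antisymm hDC]

end IsCompOf

lemma mem_compl_star : x ∈ (star Γ v)ᶜ ↔ x ≠ v ∧ ¬ Γ.Adj v x := by
  simp [star]

lemma IsCompOf.notMem_of_compl_star (hC : IsCompOf Γ (star Γ v)ᶜ C) : v ∉ C :=
  fun hv => (mem_compl_star.1 (hC.subset hv)).1 rfl

lemma IsCompOf.subset_compl_star (hC : IsCompOf Γ (star Γ v)ᶜ C) (hvw : v ≠ w)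
    (hadj : ¬ Γ.Adj v w) (hwC : w ∉ C) : C ⊆ (star Γ w)ᶜ := by
  intro x hx
  refine mem_compl_star.2 ⟨fun hxw => hwC (hxw ▸ hx), fun hwx => hwC ?_⟩
  exact hC.mem_of_adj hx (mem_compl_star.2 ⟨hvw.symm, hadj⟩) hwx.symm

lemma IsCompOf.compl_star_of_compl_inter
    (hC : IsCompOf Γ (Γ.neighborSet v ∩ Γ.neighborSet w)ᶜ C) (hvC : v ∉ C) :
    IsCompOf Γ (star Γ v)ᶜ C := by
  have hsub : (star Γ v)ᶜ ⊆ (Γ.neighborSet v ∩ Γ.neighborSet w)ᶜ :=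
    fun y hy hyvw => (mem_compl_star.1 hy).2 hyvw.1
  refine hC.of_subset (fun x hx => mem_compl_star.2 ⟨fun hxv => hvC (hxv ▸ hx), fun hvx => ?_⟩)
    fun a ha b hb hab => hC.mem_of_adj ha (hsub hb) hab
  exact hvC (hC.mem_of_adj hx (fun h => Γ.loopless.irrefl v h.1) hvx.symm)

lemma IsCompOf.isIndepSet_insert_insert (hCv : IsCompOf Γ (star Γ v)ᶜ C)
    (hCw : IsCompOf Γ (star Γ w)ᶜ C) (hadj : ¬ Γ.Adj v w) (hx : x ∈ C) :
    Γ.IsIndepSet {v, w, x} := by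
  have hvx := (mem_compl_star.1 (hCv.subset hx)).2
  have hwx := (mem_compl_star.1 (hCw.subset hx)).2
  rw [SimpleGraph.isIndepSet_iff, Set.pairwise_insert, Set.pairwise_pair]
  simp [hadj, hvx, hwx, Γ.adj_comm _ v, Γ.adj_comm x w]

lemma hasSIL_iff : HasSIL Γ ↔ ∃ v w C, v ≠ w ∧ ¬ Γ.Adj v w ∧
    IsCompOf Γ (star Γ v)ᶜ C ∧ IsCompOf Γ (star Γ w)ᶜ C := by
  constructor
  · rintro ⟨v, w, hvw, hadj, C, hC, hvC, hwC⟩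
    refine ⟨v, w, C, hvw, hadj, hC.compl_star_of_compl_inter hvC, ?_⟩
    rw [Set.inter_comm] at hC
    exact hC.compl_star_of_compl_inter hwC
  · rintro ⟨v, w, C, hvw, hadj, hCv, hCw⟩
    refine ⟨v, w, hvw, hadj, C, hCv.of_subset ?_ ?_, hCv.notMem_of_compl_star,
      hCw.notMem_of_compl_star⟩
    · exact fun x hx hxvw => (mem_compl_star.1 (hCv.subset hx)).2 hxvw.1
    · intro x hx y hy hxy
      have hyv : y ≠ v := fun h => (mem_compl_star.1 (hCv.subset hx)).2 (h ▸ hxy.symm)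
      have hyw : y ≠ w := fun h => (mem_compl_star.1 (hCw.subset hx)).2 (h ▸ hxy.symm)
      by_cases hvy : Γ.Adj v y
      · exact hCw.mem_of_adj hx (mem_compl_star.2 ⟨hyw, fun hwy => hy ⟨hvy, hwy⟩⟩) hxy
      · exact hCv.mem_of_adj hx (mem_compl_star.2 ⟨hyv, hvy⟩) hxy

lemma exists_isCompOf_superset_of_not_hasSIL (hnosil : ¬ HasSIL Γ) (hvw : v ≠ w)
    (hadj : ¬ Γ.Adj v w) (hD : IsCompOf Γ (star Γ w)ᶜ D) (hvD : v ∉ D) :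
    ∃ C, IsCompOf Γ (star Γ v)ᶜ C ∧ D ⊆ C ∧ w ∈ C := by
  have hDv := hD.subset_compl_star hvw.symm (fun h => hadj h.symm) hvD
  obtain ⟨x, hx⟩ := hD.nonempty
  obtain ⟨C, hC, hxC⟩ := exists_isCompOf_mem (Γ := Γ) (hDv hx)
  have hDC := hD.subset_of_mem hDv hC hx hxC
  refine ⟨C, hC, hDC, by_contra fun hwC => hnosil (hasSIL_iff.2 ⟨v, w, C, hvw, hadj, hC, ?_⟩)⟩
  rwa [(hC.subset_of_mem (hC.subset_compl_star hvw hadj hwC) hD hxC hx).antisymm hDC]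

lemma IsCompOf.subset_of_not_hasSIL (hnosil : ¬ HasSIL Γ) (hvw : v ≠ w) (hadj : ¬ Γ.Adj v w)
    (hC : IsCompOf Γ (star Γ v)ᶜ C) (hD : IsCompOf Γ (star Γ w)ᶜ D) (hwC : w ∈ C)
    (hvD : v ∉ D) : D ⊆ C := by
  obtain ⟨C', hC', hDC', hwC'⟩ := exists_isCompOf_superset_of_not_hasSIL hnosil hvw hadj hD hvD
  rwa [hC.eq_of_mem hC' hwC hwC']

lemma IsCompOf.disjoint_of_not_hasSIL (hnosil : ¬ HasSIL Γ) (hvw : v ≠ w)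
    (hadj : ¬ Γ.Adj v w) (hC : IsCompOf Γ (star Γ v)ᶜ C) (hD : IsCompOf Γ (star Γ w)ᶜ D)
    (hwC : w ∉ C) (hvD : v ∉ D) : Disjoint C D := by
  obtain ⟨C', hC', hDC', hwC'⟩ := exists_isCompOf_superset_of_not_hasSIL hnosil hvw hadj hD hvD
  refine Set.disjoint_left.2 fun x hxC hxD => hwC ?_
  rwa [hC.eq_of_mem hC' hxC (hDC' hxD)]

lemma IsCompOf.mem_union_of_adj (hC : IsCompOf Γ (star Γ v)ᶜ C)
    (hD : IsCompOf Γ (star Γ w)ᶜ D) (hadj : ¬ Γ.Adj v w) (hvD : v ∈ D)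
    (hx : x ∉ Γ.neighborSet v ∩ Γ.neighborSet w) (hy : y ∈ C) (hxy : Γ.Adj x y) :
    x ∈ C ∪ D := by
  by_cases hxv : x ∈ (star Γ v)ᶜ
  · exact Or.inl (hC.mem_of_adj hy hxv hxy.symm)
  rw [mem_compl_star, not_and_or, not_not, not_not] at hxv
  rcases hxv with rfl | hvx
  · exact Or.inr hvD
  · refine Or.inr (hD.mem_of_adj hvD (mem_compl_star.2 ⟨?_, fun hwx => hx ⟨hvx, hwx⟩⟩) hvx)
    rintro rfl
    exact hadj hvx

lemma IsCompOf.adj_of_not_hasSIL (hnosil : ¬ HasSIL Γ) (hvw : v ≠ w) (hadj : ¬ Γ.Adj v w)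
    (hC : IsCompOf Γ (star Γ v)ᶜ C) (hD : IsCompOf Γ (star Γ w)ᶜ D) (hwC : w ∈ C)
    (hvD : v ∈ D) (huC : u ∉ C) (huD : u ∉ D) : Γ.Adj v u ∧ Γ.Adj w u := by
  by_contra huL
  obtain ⟨E, hE, huE⟩ := exists_isCompOf_mem (Γ := Γ)
    (S := (Γ.neighborSet v ∩ Γ.neighborSet w)ᶜ) huL
  have hEout : E ⊆ (C ∪ D)ᶜ := by
    refine hE.subset_of_closed huE (by simp [huC, huD]) fun a haE ha b _ hab hb => ?_
    rcases hb with hbC | hbD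
    · exact ha (hC.mem_union_of_adj hD hadj hvD (hE.subset haE) hbC hab)
    · rw [Set.inter_comm] at hE
      exact ha (Set.union_comm D C ▸
        hD.mem_union_of_adj hC (fun h => hadj h.symm) hwC (hE.subset haE) hbD hab)
  by_cases hvE : v ∈ E
  · exact hEout hvE (Or.inr hvD)
  by_cases hwE : w ∈ E
  · exact hEout hwE (Or.inl hwC)
  exact hnosil ⟨v, w, hvw, hadj, E, hE, hvE, hwE⟩

namespace GraphProduct

theorem hom_ext {H : Type*} [Monoid H] {f f' : GraphProduct Γ G →* H}
    (h : ∀ v (x : G v), f (of Γ G x) = f' (of Γ G x)) : f = f' :=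
  QuotientGroup.monoidHom_ext _ (CoprodI.ext_hom _ _ fun v => MonoidHom.ext (h v))

theorem mulAut_ext {φ ψ : MulAut (GraphProduct Γ G)}
    (h : ∀ v (x : G v), φ (of Γ G x) = ψ (of Γ G x)) : φ = ψ :=
  MulEquiv.toMonoidHom_injective (hom_ext h)

variable (Γ) in
def lift {H : Type*} [Group H] (f : ∀ v, G v →* H)
    (hf : ∀ v w, Γ.Adj v w → ∀ (g : G v) (k : G w), Commute (f v g) (f w k)) :
    GraphProduct Γ G →* H :=
  QuotientGroup.lift _ (CoprodI.lift f) <| Subgroup.normalClosure_le_normal <| by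
    rintro _ ⟨v, w, hvw, g, k, rfl⟩
    simpa [commutatorElement_def] using
      commutatorElement_eq_one_iff_commute.2 (hf v w hvw g k)

theorem lift_of {H : Type*} [Group H] (f : ∀ v, G v →* H)
    (hf : ∀ v w, Γ.Adj v w → ∀ (g : G v) (k : G w), Commute (f v g) (f w k)) (x : G v) :
    lift Γ f hf (of Γ G x) = f v x :=
  CoprodI.lift_of f x

open Classical in
noncomputable def toCoprodI (hT : Γ.IsIndepSet T) : GraphProduct Γ G →* CoprodI G :=
  lift Γ (fun u => if u ∈ T then CoprodI.of else 1) fun v w hvw g k => by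
    by_cases hv : v ∈ T <;> by_cases hw : w ∈ T
    · exact absurd hvw (hT hv hw hvw.ne)
    all_goals simp [hv, hw]

theorem toCoprodI_of (hT : Γ.IsIndepSet T) (hu : u ∈ T) (x : G u) :
    toCoprodI hT (of Γ G x) = CoprodI.of x := by
  rw [toCoprodI, lift_of, if_pos hu]

end GraphProduct

namespace IsPartialConjBy

variable {a : G v} {b : G w} {πa πb : MulAut (GraphProduct Γ G)}

theorem commute (ha : IsPartialConjBy Γ G a πa C) (hb : IsPartialConjBy Γ G b πb D)
    (hwC : w ∉ C) (hvD : v ∉ D) (hCD : Disjoint C D ∨ Commute (of Γ G a) (of Γ G b)) :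
    Commute πa πb := by
  refine GraphProduct.mulAut_ext fun u x => ?_
  simp only [MulAut.mul_apply]
  by_cases huC : u ∈ C <;> by_cases huD : u ∈ D <;>
    simp only [ha.1, ha.2, hb.1, hb.2, huC, huD, hwC, hvD, map_mul, map_inv, not_false_eq_true]
  -- only the case `u ∈ C ∩ D` is left
  have hab : Commute (of Γ G a) (of Γ G b) :=
    hCD.resolve_left (Set.not_disjoint_iff.2 ⟨u, huC, huD⟩)
  simp only [← MulAut.conj_apply, ← MulAut.mul_apply, ← map_mul, hab.eq]

theorem commute_of_subset (ha : IsPartialConjBy Γ G a πa C) (hb : IsPartialConjBy Γ G b πb D)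
    (hwC : w ∈ C) (hvD : v ∉ D) (hDC : D ⊆ C) : Commute πa πb := by
  refine GraphProduct.mulAut_ext fun u x => ?_
  simp only [MulAut.mul_apply]
  by_cases huD : u ∈ D
  · simp only [ha.1, hb.1, huD, hDC huD, hwC, hb.2, hvD, map_mul, map_inv, not_false_eq_true]
    group
  · by_cases huC : u ∈ C <;>
      simp only [ha.1, ha.2, hb.2, huC, huD, hvD, map_mul, map_inv, not_false_eq_true]

/-- This is `πa * πb = conj ⁅a, b⁆ * (πb * πa)`, with the conjugation moved to the right,
where it becomes conjugation by `(πb * πa)⁻¹ ⁅a, b⁆ = ⁅a⁻¹, b⁻¹⁆`. -/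
theorem mul_eq_mul_conj (ha : IsPartialConjBy Γ G a πa C) (hb : IsPartialConjBy Γ G b πb D)
    (hvC : v ∉ C) (hwD : w ∉ D) (hwC : w ∈ C) (hvD : v ∈ D)
    (hout : ∀ u ∉ C, u ∉ D → ∀ x : G u, Commute (of Γ G a) (of Γ G x) ∧
      Commute (of Γ G b) (of Γ G x)) :
    πa * πb = πb * πa * MulAut.conj ((of Γ G a)⁻¹ * (of Γ G b)⁻¹ * of Γ G a * of Γ G b) := by
  refine GraphProduct.mulAut_ext fun u x => ?_
  simp only [MulAut.mul_apply, MulAut.conj_apply]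
  by_cases huCD : u ∈ C ∨ u ∈ D
  · by_cases huC : u ∈ C <;> by_cases huD : u ∈ D <;>
      simp only [ha.1, ha.2, hb.1, hb.2, huC, huD, hvC, hwD, hwC, hvD, map_mul, map_inv,
        not_false_eq_true, or_self] at huCD ⊢ <;>
      group
  · obtain ⟨huC, huD⟩ := not_or.1 huCD
    obtain ⟨hax, hbx⟩ := hout u huC huD x
    have hc := ((hax.inv_left.mul_left hbx.inv_left).mul_left hax).mul_left hbx
    rw [hc.eq, mul_inv_cancel_right, ha.2 u huC, hb.2 u huD, ha.2 u huC]

theorem mul_ne_mul_conj {x : G u} (ha : IsPartialConjBy Γ G a πa C)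
    (hb : IsPartialConjBy Γ G b πb C) (hT : Γ.IsIndepSet {v, w, u}) (hvw : v ≠ w)
    (hvC : v ∉ C) (hwC : w ∉ C) (huC : u ∈ C) (ha1 : a ≠ 1) (hb1 : b ≠ 1) (hx1 : x ≠ 1)
    (g : GraphProduct Γ G) : πa * πb ≠ πb * πa * MulAut.conj g := by
  -- Retracting onto `G v * G w * G u`, the conjugator must centralise `a` and `b`, hence be
  -- trivial; then the two sides differ on `x`.
  intro h
  set k := πb (πa g)
  have hconj : ∀ y, πa (πb y) = k * πb (πa y) * k⁻¹ := fun y => by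
    simpa [k] using DFunLike.congr_fun h y
  set r := GraphProduct.toCoprodI (G := G) hT
  have hr : ∀ {t} (c : G t), t ∈ ({v, w, u} : Set V) → r (of Γ G c) = CoprodI.of c :=
    fun c ht => GraphProduct.toCoprodI_of hT ht c
  have hcomm : ∀ {t} (c : G t), t ∉ C → t ∈ ({v, w, u} : Set V) →
      Commute (r k) (CoprodI.of c) := by
    intro t c htC htT
    have hc := congrArg r (hconj (of Γ G c))
    simp only [ha.2 t htC, hb.2 t htC, map_mul, map_inv, hr c htT] at hc
    exact (eq_mul_inv_iff_mul_eq.1 hc).symm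
  have hk : r k = 1 := CoprodI.eq_one_of_commute_of_ne hvw ha1 hb1
    (hcomm a hvC (by simp)) (hcomm b hwC (by simp))
  have hx := congrArg r (hconj (of Γ G x))
  simp only [ha.1, ha.2, hb.1, hb.2, huC, hvC, hwC, map_mul, map_inv, hk, one_mul, inv_one,
    mul_one, not_false_eq_true] at hx
  simp only [hr, Set.mem_insert_iff, Set.mem_singleton_iff, true_or, or_true] at hx
  refine CoprodI.conj_mul_of_ne_conj_mul_of hvw (ne_of_mem_of_not_mem huC hvC).symm
    (ne_of_mem_of_not_mem huC hwC).symm ha1 hb1 hx1 ?_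
  simpa only [MulAut.conj_apply, mul_inv_rev, mul_assoc] using hx

end IsPartialConjBy

theorem IsPartialConj.exists_mul_eq_mul_conj (hnosil : ¬ HasSIL Γ) {gen : ∀ v, G v}
    {πa πb : MulAut (GraphProduct Γ G)} (hC : IsCompOf Γ (star Γ v)ᶜ C)
    (hD : IsCompOf Γ (star Γ w)ᶜ D) (ha : IsPartialConj Γ G gen πa v C)
    (hb : IsPartialConj Γ G gen πb w D) : ∃ g, πa * πb = πb * πa * MulAut.conj g := by
  have hcomm : Commute πa πb → ∃ g, πa * πb = πb * πa * MulAut.conj g :=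
    fun h => ⟨1, by rw [map_one, mul_one, h.eq]⟩
  have hvC := hC.notMem_of_compl_star
  have hwD := hD.notMem_of_compl_star
  by_cases hvw : v = w
  · subst hvw
    exact hcomm (IsPartialConjBy.commute ha hb hvC hwD (Or.inr (Commute.refl _)))
  by_cases hadj : Γ.Adj v w
  · exact hcomm (IsPartialConjBy.commute ha hb
      (fun h => (mem_compl_star.1 (hC.subset h)).2 hadj)
      (fun h => (mem_compl_star.1 (hD.subset h)).2 hadj.symm)
      (Or.inr (of_commute Γ G hadj _ _)))
  have hadj' : ¬ Γ.Adj w v := fun h => hadj h.symm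
  by_cases hwC : w ∈ C <;> by_cases hvD : v ∈ D
  · exact ⟨_, IsPartialConjBy.mul_eq_mul_conj ha hb hvC hwD hwC hvD fun u huC huD x =>
      (hC.adj_of_not_hasSIL hnosil hvw hadj hD hwC hvD huC huD).imp
        (of_commute Γ G · _ x) (of_commute Γ G · _ x)⟩
  · exact hcomm (IsPartialConjBy.commute_of_subset ha hb hwC hvD
      (hC.subset_of_not_hasSIL hnosil hvw hadj hD hwC hvD))
  · exact hcomm (IsPartialConjBy.commute_of_subset hb ha hvD hwC
      (hD.subset_of_not_hasSIL hnosil (Ne.symm hvw) hadj' hC hvD hwC)).symm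
  · exact hcomm (IsPartialConjBy.commute ha hb hwC hvD
      (Or.inl (hC.disjoint_of_not_hasSIL hnosil hvw hadj hD hwC hvD)))

theorem Outpc_abelian_iff_no_SIL_general {V : Type u} (Γ : SimpleGraph V)
    (G : V → Type uG) [∀ v, Group (G v)] [∀ v, Nontrivial (G v)]
    (gen : ∀ v, G v) (hgen : ∀ v, Subgroup.zpowers (gen v) = ⊤)
    (πfam : TV Γ → MulAut (GraphProduct Γ G))
    (hπ : ∀ p : TV Γ, IsPartialConj Γ G gen (πfam p) p.1.1 p.1.2)
    [hNi : (((MulAut.conj : GraphProduct Γ G →* MulAut (GraphProduct Γ G)).range).subgroupOf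
      (Subgroup.closure (Set.range πfam))).Normal] :
    (∀ a b : ↥(Subgroup.closure (Set.range πfam)) ⧸
        ((MulAut.conj : GraphProduct Γ G →* MulAut (GraphProduct Γ G)).range).subgroupOf
          (Subgroup.closure (Set.range πfam)),
      a * b = b * a) ↔ ¬ HasSIL Γ := by
  simp only [Subgroup.quotient_subgroupOf_closure_commutative_iff, Set.forall_mem_range,
    MonoidHom.mem_range, exists_exists_eq_and]
  constructor
  · intro h hsil
    obtain ⟨v, w, C, hvw, hadj, hCv, hCw⟩ := hasSIL_iff.1 hsil
    obtain ⟨x, hx⟩ := hCv.nonempty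
    obtain ⟨g, hg⟩ := h ⟨(v, C), hCv⟩ ⟨(w, C), hCw⟩
    have hgen1 : ∀ v, gen v ≠ 1 := fun v => Subgroup.zpowers_ne_bot.1 (hgen v ▸ top_ne_bot)
    exact IsPartialConjBy.mul_ne_mul_conj (hπ ⟨(v, C), hCv⟩) (hπ ⟨(w, C), hCw⟩)
      (hCv.isIndepSet_insert_insert hCw hadj hx) hvw hCv.notMem_of_compl_star
      hCw.notMem_of_compl_star hx (hgen1 v) (hgen1 w) (hgen1 x) g hg
  · exact fun hnosil p q => IsPartialConj.exists_mul_eq_mul_conj hnosil p.2 q.2 (hπ p) (hπ q)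

/-- For a finite connected graph `Γ`, `Out^pc(G_Γ)` is abelian if and
only if `Γ` contains no SILs. -/
theorem Outpc_abelian_iff_no_SIL {V : Type u} [Finite V] (Γ : SimpleGraph V)
    (hconn : Γ.Connected)
    (G : V → Type uG) [∀ v, Group (G v)] [∀ v, Nontrivial (G v)]
    (gen : ∀ v, G v) (hgen : ∀ v, Subgroup.zpowers (gen v) = ⊤)
    (πfam : TV Γ → MulAut (GraphProduct Γ G))
    (hπ : ∀ p : TV Γ, IsPartialConj Γ G gen (πfam p) p.1.1 p.1.2)
    [hNi : (((MulAut.conj : GraphProduct Γ G →* MulAut (GraphProduct Γ G)).range).subgroupOf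
      (Subgroup.closure (Set.range πfam))).Normal] :
    (∀ a b : ↥(Subgroup.closure (Set.range πfam)) ⧸
        ((MulAut.conj : GraphProduct Γ G →* MulAut (GraphProduct Γ G)).range).subgroupOf
          (Subgroup.closure (Set.range πfam)),
      a * b = b * a) ↔ ¬ HasSIL Γ :=
  Outpc_abelian_iff_no_SIL_general Γ G gen hgen πfam hπ (hNi := hNi)

end ArXiv
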